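/- Let M be an n×n block matrix M = [[A, B], [C, D]] where A is an invertible k×k block and the Schur complement M/A = D - C A⁻¹ B is invertible. Then the reciprocal of the smallest singular value of M satisfies s_n(M)⁻¹ ≤ ‖A⁻¹‖ + ‖(M/A)⁻¹‖ (1 + ‖A⁻¹B‖)(1 + ‖CA⁻¹‖), where ‖·‖ denotes the operator norm. -/

import Mathlib

open Matrix

/-- Operator (spectral) norm of a real matrix, viewed as a linear map between
Euclidean spaces. -/
noncomputable def opNorm {m n : Type*} [Fintype m] [Fintype n] [DecidableEq n]
    (A : Matrix m n ℝ) : ℝ :=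
  ‖LinearMap.toContinuousLinearMap (Matrix.toEuclideanLin A)‖

/-!
Writing `S = (M/A)⁻¹`, the Schur block-inverse formula gives
`M⁻¹ = [[A⁻¹ + A⁻¹B S CA⁻¹, -A⁻¹B S], [-S CA⁻¹, S]]`. The spectral norm of a block matrix is at
most the sum of the norms of its blocks, because each block is cut out by multiplying with
coordinate embeddings and projections of norm at most one. Bounding each block by
submultiplicativity, the three blocks containing `S` sum to `‖S‖ (1 + ‖A⁻¹B‖) (1 + ‖CA⁻¹‖) - ‖S‖`.
-/

namespace Matrix

section InvFromBlocks

variable {m n α : Type*} [Fintype m] [Fintype n] [DecidableEq m] [DecidableEq n] [CommRing α]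

theorem inv_fromBlocks_eq_of_isUnit {A : Matrix m m α} {B : Matrix m n α} {C : Matrix n m α}
    {D : Matrix n n α} (hA : IsUnit A) (hS : IsUnit (D - C * A⁻¹ * B)) :
    (fromBlocks A B C D)⁻¹ =
      fromBlocks (A⁻¹ + A⁻¹ * B * (D - C * A⁻¹ * B)⁻¹ * C * A⁻¹)
        (-(A⁻¹ * B * (D - C * A⁻¹ * B)⁻¹))
        (-((D - C * A⁻¹ * B)⁻¹ * C * A⁻¹)) (D - C * A⁻¹ * B)⁻¹ := by
  let := hA.invertible
  let : Invertible (D - C * ⅟A * B) := by rw [invOf_eq_nonsing_inv]; exact hS.invertible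
  let := fromBlocks₁₁Invertible A B C D
  simp_rw [← invOf_eq_nonsing_inv, invOf_fromBlocks₁₁_eq]

end InvFromBlocks

open scoped Matrix.Norms.L2Operator

section L2OpNorm

variable {𝕜 : Type*} [RCLike 𝕜] {l m n p q : Type*} [Fintype l] [Fintype m] [Fintype n]
  [Fintype p] [Fintype q]

theorem l2_opNorm_le_one_of_mul_conjTranspose_eq_one [DecidableEq m] [DecidableEq n]
    {E : Matrix m n 𝕜} (h : E * Eᴴ = 1) : ‖E‖ ≤ 1 := by
  have hsq := l2_opNorm_conjTranspose_mul_self Eᴴ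
  rw [conjTranspose_conjTranspose, h, l2_opNorm_conjTranspose] at hsq
  have hone : ‖(1 : Matrix m m 𝕜)‖ ≤ 1 := by
    rw [← diagonal_one, l2_opNorm_diagonal]
    exact pi_norm_le_iff_of_nonneg zero_le_one |>.mpr fun _ ↦ norm_one.le
  nlinarith [norm_nonneg E]

variable [DecidableEq m] [DecidableEq n]

theorem l2_opNorm_fromCols_one_zero_le : ‖fromCols (1 : Matrix m m 𝕜) (0 : Matrix m n 𝕜)‖ ≤ 1 :=
  l2_opNorm_le_one_of_mul_conjTranspose_eq_one <| by
    simp [conjTranspose_fromCols_eq_fromRows_conjTranspose, fromCols_mul_fromRows]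

theorem l2_opNorm_fromCols_zero_one_le : ‖fromCols (0 : Matrix m n 𝕜) (1 : Matrix m m 𝕜)‖ ≤ 1 :=
  l2_opNorm_le_one_of_mul_conjTranspose_eq_one <| by
    simp [conjTranspose_fromCols_eq_fromRows_conjTranspose, fromCols_mul_fromRows]

theorem l2_opNorm_fromCols_le (X : Matrix l m 𝕜) (Y : Matrix l n 𝕜) :
    ‖fromCols X Y‖ ≤ ‖X‖ + ‖Y‖ := by
  have hsplit : fromCols X Y = X * fromCols (1 : Matrix m m 𝕜) (0 : Matrix m n 𝕜) +
      Y * fromCols (0 : Matrix n m 𝕜) (1 : Matrix n n 𝕜) := by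
    ext i (j | j) <;> simp [mul_fromCols]
  calc ‖fromCols X Y‖ ≤ ‖X * fromCols (1 : Matrix m m 𝕜) (0 : Matrix m n 𝕜)‖ +
        ‖Y * fromCols (0 : Matrix n m 𝕜) (1 : Matrix n n 𝕜)‖ := hsplit ▸ norm_add_le _ _
    _ ≤ ‖X‖ + ‖Y‖ := by
      gcongr
      · exact (l2_opNorm_mul _ _).trans
          (mul_le_of_le_one_right (norm_nonneg X) l2_opNorm_fromCols_one_zero_le)
      · exact (l2_opNorm_mul _ _).trans
          (mul_le_of_le_one_right (norm_nonneg Y) l2_opNorm_fromCols_zero_one_le)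

theorem l2_opNorm_fromRows_le [DecidableEq l] (X : Matrix m l 𝕜) (Y : Matrix n l 𝕜) :
    ‖fromRows X Y‖ ≤ ‖X‖ + ‖Y‖ := by
  simpa only [← conjTranspose_fromRows_eq_fromCols_conjTranspose, l2_opNorm_conjTranspose]
    using l2_opNorm_fromCols_le Xᴴ Yᴴ

theorem l2_opNorm_fromBlocks_le [DecidableEq p] [DecidableEq q] (P : Matrix m p 𝕜)
    (Q : Matrix m q 𝕜) (R : Matrix n p 𝕜) (S : Matrix n q 𝕜) :
    ‖fromBlocks P Q R S‖ ≤ ‖P‖ + ‖Q‖ + ‖R‖ + ‖S‖ := by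
  rw [← fromRows_fromCols_eq_fromBlocks]
  calc ‖fromRows (fromCols P Q) (fromCols R S)‖ ≤ ‖fromCols P Q‖ + ‖fromCols R S‖ :=
        l2_opNorm_fromRows_le _ _
    _ ≤ ‖P‖ + ‖Q‖ + ‖R‖ + ‖S‖ := by
      linarith [l2_opNorm_fromCols_le P Q, l2_opNorm_fromCols_le R S]

theorem l2_opNorm_inv_fromBlocks_le {A : Matrix m m 𝕜} {B : Matrix m n 𝕜} {C : Matrix n m 𝕜}
    {D : Matrix n n 𝕜} (hA : IsUnit A) (hS : IsUnit (D - C * A⁻¹ * B)) :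
    ‖(fromBlocks A B C D)⁻¹‖ ≤
      ‖A⁻¹‖ + ‖(D - C * A⁻¹ * B)⁻¹‖ * (1 + ‖A⁻¹ * B‖) * (1 + ‖C * A⁻¹‖) := by
  rw [inv_fromBlocks_eq_of_isUnit hA hS]
  set S := (D - C * A⁻¹ * B)⁻¹
  have hBS : ‖A⁻¹ * B * S‖ ≤ ‖A⁻¹ * B‖ * ‖S‖ := l2_opNorm_mul _ _
  have hSC : ‖S * C * A⁻¹‖ ≤ ‖S‖ * ‖C * A⁻¹‖ := by
    rw [Matrix.mul_assoc]; exact l2_opNorm_mul _ _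
  have hBSC : ‖A⁻¹ * B * S * C * A⁻¹‖ ≤ ‖A⁻¹ * B‖ * ‖S‖ * ‖C * A⁻¹‖ := by
    rw [Matrix.mul_assoc _ C]
    exact (l2_opNorm_mul _ _).trans (by gcongr)
  calc ‖fromBlocks (A⁻¹ + A⁻¹ * B * S * C * A⁻¹) (-(A⁻¹ * B * S)) (-(S * C * A⁻¹)) S‖
      ≤ ‖A⁻¹ + A⁻¹ * B * S * C * A⁻¹‖ + ‖A⁻¹ * B * S‖ + ‖S * C * A⁻¹‖ + ‖S‖ := by
        simpa only [norm_neg] using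
          l2_opNorm_fromBlocks_le (A⁻¹ + A⁻¹ * B * S * C * A⁻¹) (-(A⁻¹ * B * S)) (-(S * C * A⁻¹)) S
    _ ≤ ‖A⁻¹‖ + ‖A⁻¹ * B * S * C * A⁻¹‖ + ‖A⁻¹ * B * S‖ + ‖S * C * A⁻¹‖ + ‖S‖ := by
        gcongr; exact norm_add_le _ _
    _ ≤ ‖A⁻¹‖ + ‖S‖ * (1 + ‖A⁻¹ * B‖) * (1 + ‖C * A⁻¹‖) := by
        linarith

end L2OpNorm

end Matrix

/-- Block-inverse bound: for `M = [[A,B],[C,D]]` with `A` and the Schur complement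
`M/A = D - C A⁻¹ B` invertible, `s_n(M)⁻¹ = ‖M⁻¹‖` satisfies the stated bound. -/
theorem stmt0 {k l : ℕ} (A : Matrix (Fin k) (Fin k) ℝ) (B : Matrix (Fin k) (Fin l) ℝ)
    (C : Matrix (Fin l) (Fin k) ℝ) (D : Matrix (Fin l) (Fin l) ℝ)
    (hA : IsUnit A) (hS : IsUnit (D - C * A⁻¹ * B)) :
    opNorm (Matrix.fromBlocks A B C D)⁻¹ ≤
      opNorm A⁻¹ +
        opNorm (D - C * A⁻¹ * B)⁻¹ * (1 + opNorm (A⁻¹ * B)) * (1 + opNorm (C * A⁻¹)) :=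
  open scoped Matrix.Norms.L2Operator in Matrix.l2_opNorm_inv_fromBlocks_le hA hS
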